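/- With Γ and Γ̂ as the graph surface z = ax + by + c over a bounded domain D and its image under the diagonal scaling by Λ^{-1/2}, Λ = diag(λ_min, λ_mid, λ_max), 0 < λ_min ≤ λ_mid ≤ λ_max, the area ratio is bounded: |Γ|/|Γ̂| ≤ λ_mid^{1/2} λ_max^{1/2}. -/

import Mathlib

open MeasureTheory

/-!
After cancelling `|D|` the ratio is `√(1+a²+b²) · √λmin · √λmid / √(1 + a²λmin/λmax + b²λmid/λmax)`,
so the claim reduces to `λmin (1 + a² + b²) ≤ λmax + a² λmin + b² λmid`, which holds termwise
because `λmin` is the smallest of the three eigenvalues.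
-/

lemma mul_div_mul_div_le {s t d : ℝ} (hsdt : 0 ≤ s * d / t) (V : ℝ) :
    s * V / (t * (V / d)) ≤ s * d / t :=
  calc s * V / (t * (V / d))
      _ = s * d / t * (V / V) := by rw [mul_div_assoc', div_div_eq_mul_div]; ring
      _ ≤ s * d / t := mul_le_of_le_one_right hsdt (div_self_le_one V)

lemma sqrt_mul_sqrt_one_add_sq_add_sq_le {lmin lmid lmax : ℝ} (hmin : 0 < lmin)
    (h1 : lmin ≤ lmid) (h2 : lmid ≤ lmax) (a b : ℝ) :
    √lmin * √(1 + a ^ 2 + b ^ 2) ≤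
      √lmax * √(1 + a ^ 2 * (lmin / lmax) + b ^ 2 * (lmid / lmax)) := by
  have hmax : 0 < lmax := by linarith
  rw [← Real.sqrt_mul hmin.le, ← Real.sqrt_mul hmax.le]
  apply Real.sqrt_le_sqrt
  have hexpand : lmax * (1 + a ^ 2 * (lmin / lmax) + b ^ 2 * (lmid / lmax)) =
      lmax + a ^ 2 * lmin + b ^ 2 * lmid := by
    field_simp
  rw [hexpand]
  nlinarith [sq_nonneg a, sq_nonneg b]

theorem stmt11_general (D : Set (ℝ × ℝ))
    (a b : ℝ)
    (lmin lmid lmax : ℝ) (hmin : 0 < lmin) (h1 : lmin ≤ lmid) (h2 : lmid ≤ lmax)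
    (areaΓ areaΓhat areaDhat : ℝ)
    (hΓ : areaΓ = Real.sqrt (1 + a ^ 2 + b ^ 2) * (volume D).toReal)
    (hDhat : areaDhat = (volume D).toReal / (Real.sqrt lmin * Real.sqrt lmid))
    (hΓhat : areaΓhat =
      Real.sqrt (1 + a ^ 2 * (lmin / lmax) + b ^ 2 * (lmid / lmax)) * areaDhat) :
    areaΓ / areaΓhat ≤ Real.sqrt lmid * Real.sqrt lmax := by
  have hmax : 0 < lmax := by linarith
  have hmid : 0 < lmid := by linarith
  have hT : 0 < √(1 + a ^ 2 * (lmin / lmax) + b ^ 2 * (lmid / lmax)) := by positivity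
  subst hΓ hΓhat hDhat
  calc _ ≤ √(1 + a ^ 2 + b ^ 2) * (√lmin * √lmid) /
          √(1 + a ^ 2 * (lmin / lmax) + b ^ 2 * (lmid / lmax)) :=
        mul_div_mul_div_le (by positivity) _
    _ ≤ √lmid * √lmax := by
        rw [div_le_iff₀ hT]
        have key := sqrt_mul_sqrt_one_add_sq_add_sq_le hmin h1 h2 a b
        nlinarith [key, Real.sqrt_nonneg lmid]

/-- With `Γ`, `Γ̂` as the graph surface `z = ax+by+c` over `D` and its image
under the diagonal scaling by `Λ^{-1/2}`: the area ratio is bounded by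
`(x,y,z) ↦ (x/√λmin, y/√λmid, z/√λmax)`, so that (per the surface-area formula)
`|Γ| = √(1+a²+b²)·|D|` and `|Γ̂| = √(1 + a²λmin/λmax + b²λmid/λmax)·|D̂|` with
`|D̂| = |D|/(√λmin·√λmid)`. Then
`|Γ|/|Γ̂| ≤ √λmid · √λmax`. -/
theorem stmt11 (D : Set (ℝ × ℝ)) (hD : MeasurableSet D)
    (hDpos : 0 < volume D) (hDfin : volume D < ⊤)
    (a b c : ℝ)
    (lmin lmid lmax : ℝ) (hmin : 0 < lmin) (h1 : lmin ≤ lmid) (h2 : lmid ≤ lmax)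
    (areaΓ areaΓhat areaDhat : ℝ)
    (hΓ : areaΓ = Real.sqrt (1 + a ^ 2 + b ^ 2) * (volume D).toReal)
    (hDhat : areaDhat = (volume D).toReal / (Real.sqrt lmin * Real.sqrt lmid))
    (hΓhat : areaΓhat =
      Real.sqrt (1 + a ^ 2 * (lmin / lmax) + b ^ 2 * (lmid / lmax)) * areaDhat) :
    areaΓ / areaΓhat ≤ Real.sqrt lmid * Real.sqrt lmax :=
  stmt11_general D a b lmin lmid lmax hmin h1 h2 areaΓ areaΓhat areaDhat hΓ hDhat hΓhat
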